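/- Let (X, d) be a geodesic metric space that is δ-hyperbolic for some δ ≥ 0. For every k ≥ 1 and R ≥ 0 there is a constant N(k,R) such that: if p : [a,b] → X and q : [a',b'] → X are k-quasigeodesics with d(p(a), q(a')) ≤ R and d(p(b), q(b')) ≤ R, then the image of p is contained in the closed N(k,R)-neighborhood of the image of q, and the image of q is contained in the closed N(k,R)-neighborhood of the image of p. Moreover, for fixed δ, N(k,R) can be chosen bounded above by a polynomial function of k and R. (Corollary 2.2.6.) -/

import Mathlib

open Metric Set

/-- A geodesic from `x` to `y`: an isometric parametrization of `[0, dist x y]`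
with the correct endpoints. -/
def IsGeodesicSegment {X : Type*} [MetricSpace X] (x y : X) (γ : ℝ → X) : Prop :=
  γ 0 = x ∧ γ (dist x y) = y ∧
    ∀ s ∈ Set.Icc (0 : ℝ) (dist x y), ∀ t ∈ Set.Icc (0 : ℝ) (dist x y),
      dist (γ s) (γ t) = |s - t|

/-- A geodesic metric space: any two points are joined by a geodesic. -/
def GeodesicSpace (X : Type*) [MetricSpace X] : Prop :=
  ∀ x y : X, ∃ γ : ℝ → X, IsGeodesicSegment x y γ

/-- `δ`-hyperbolicity via slim triangles: each side of any geodesic triangle is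
contained in the closed `δ`-neighborhood of the union of the other two sides. -/
def SlimTriangles {X : Type*} [MetricSpace X] (δ : ℝ) : Prop :=
  ∀ x y z : X, ∀ γ₁ γ₂ γ₃ : ℝ → X,
    IsGeodesicSegment x y γ₁ → IsGeodesicSegment y z γ₂ → IsGeodesicSegment x z γ₃ →
      γ₁ '' Set.Icc 0 (dist x y) ⊆
        Metric.cthickening δ (γ₂ '' Set.Icc 0 (dist y z) ∪ γ₃ '' Set.Icc 0 (dist x z)) ∧
      γ₂ '' Set.Icc 0 (dist y z) ⊆
        Metric.cthickening δ (γ₁ '' Set.Icc 0 (dist x y) ∪ γ₃ '' Set.Icc 0 (dist x z)) ∧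
      γ₃ '' Set.Icc 0 (dist x z) ⊆
        Metric.cthickening δ (γ₁ '' Set.Icc 0 (dist x y) ∪ γ₂ '' Set.Icc 0 (dist y z))

/-- A `k`-quasigeodesic defined on `[a,b]`. -/
def IsQuasigeodesic {X : Type*} [MetricSpace X] (k a b : ℝ) (p : ℝ → X) : Prop :=
  ∀ s ∈ Set.Icc a b, ∀ t ∈ Set.Icc a b,
    (1 / k) * |s - t| - k ≤ dist (p s) (p t) ∧ dist (p s) (p t) ≤ k * |s - t| + k

/-!
Let `γ` be a geodesic joining the ends of the quasigeodesic `p`, and `x₀` the point of `γ` farthest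
from `p`, at distance `D`. Cutting out the subsegment of `γ` of radius `D` around `x₀` and joining
its ends to nearby points of `p` gives a quadrilateral whose slimness puts `x₀` within `2δ` of a
geodesic between two points of `p` with parameters `O(k D)` apart. Bisecting that parameter
interval shows such a geodesic is `O(k + δ log (k D))`-close to `p`, so `D` is bounded by a
polynomial in `k` and `δ`. By connectedness of `γ`, `p` is in turn close to `γ`, and geodesics with
`R`-close ends are `(2δ + R)`-close by slimness of a quadrilateral.
-/

section Thickening

variable {α : Type*} [PseudoMetricSpace α]

theorem mem_cthickening_iff_infDist_le {s : Set α} (hs : s.Nonempty) {r : ℝ} (hr : 0 ≤ r)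
    {x : α} : x ∈ cthickening r s ↔ infDist x s ≤ r := by
  rw [mem_cthickening_iff, infDist, ENNReal.le_ofReal_iff_toReal_le (infEDist_ne_top hs) hr]

theorem subset_cthickening_trans {s t u : Set α} {r r' : ℝ} (hr : 0 ≤ r) (hr' : 0 ≤ r')
    (hst : s ⊆ cthickening r t) (htu : t ⊆ cthickening r' u) : s ⊆ cthickening (r + r') u :=
  hst.trans ((cthickening_subset_of_subset r htu).trans (cthickening_cthickening_subset hr hr' u))

theorem IsPreconnected.exists_mem_cthickening_inter {K A B : Set α} {r : ℝ}
    (hK : IsPreconnected K) (hKAB : K ⊆ cthickening r (A ∪ B)) (hA : (K ∩ A).Nonempty)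
    (hB : (K ∩ B).Nonempty) : ∃ x ∈ K, x ∈ cthickening r A ∧ x ∈ cthickening r B :=
  isPreconnected_closed_iff.1 hK _ _ isClosed_cthickening isClosed_cthickening
    (by rwa [← cthickening_union])
    (hA.mono (inter_subset_inter_right K (self_subset_cthickening A)))
    (hB.mono (inter_subset_inter_right K (self_subset_cthickening B)))

end Thickening

section Arithmetic

theorem Nat.sq_le_four_mul_two_pow (n : ℕ) : n ^ 2 ≤ 4 * 2 ^ n := by
  induction n with
  | zero => norm_num
  | succ n ih =>
    rcases Nat.lt_or_ge n 3 with h | h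
    · interval_cases n <;> norm_num
    · calc (n + 1) ^ 2 ≤ 2 * n ^ 2 := by nlinarith
        _ ≤ 2 * (4 * 2 ^ n) := Nat.mul_le_mul_left 2 ih
        _ = 4 * 2 ^ (n + 1) := by ring

theorem natCast_le_two_pow_div_add (n : ℕ) {c : ℝ} (hc : 0 < c) : (n : ℝ) ≤ 2 ^ n / c + c := by
  have h : (n : ℝ) ^ 2 ≤ 4 * 2 ^ n := by exact_mod_cast Nat.sq_le_four_mul_two_pow n
  rw [div_add' _ _ _ hc.ne', le_div_iff₀ hc]
  nlinarith [sq_nonneg ((n : ℝ) - 2 * c)]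

theorem exists_le_two_pow_le_two_mul_add_one {T : ℝ} (hT : 0 ≤ T) :
    ∃ n : ℕ, T ≤ 2 ^ n ∧ (2 : ℝ) ^ n ≤ 2 * T + 1 := by
  classical
  have hex : ∃ n : ℕ, T ≤ 2 ^ n := (pow_unbounded_of_one_lt T one_lt_two).imp fun _ h => h.le
  refine ⟨Nat.find hex, Nat.find_spec hex, ?_⟩
  rcases h : Nat.find hex with _ | m
  · rw [pow_zero]
    linarith
  · have hm : ¬ T ≤ 2 ^ m := Nat.find_min hex (by omega)
    rw [pow_succ]
    linarith [not_le.1 hm]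

/-- The least admissible `n` is about `log₂ (k D)`, so `n * δ` is absorbed into `D / 2`. -/
theorem le_of_forall_le_two_pow_imp {k δ D : ℝ} (hk : 1 ≤ k) (hδ : 0 ≤ δ) (hD : 0 ≤ D)
    (h : ∀ n : ℕ, k * (4 * D + 2 + k) ≤ 2 ^ n → D ≤ 4 * δ + 1 + 2 * k + n * δ) :
    D ≤ 50 * k * (δ + 1) ^ 2 := by
  set T := k * (4 * D + 2 + k) with hT
  obtain ⟨n, hTn, hnT⟩ := exists_le_two_pow_le_two_mul_add_one (T := T) (by positivity)
  set c := 16 * k * (δ + 1)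
  have hc : 0 < c := by positivity
  have hn : n * δ ≤ (2 * T + 1) * δ / c + c * δ :=
    calc n * δ ≤ (2 ^ n / c + c) * δ := by gcongr; exact natCast_le_two_pow_div_add n hc
      _ ≤ ((2 * T + 1) / c + c) * δ := by gcongr
      _ = _ := by ring
  have habsorb : (2 * T + 1) * δ / c ≤ D / 2 + k := by
    rw [div_le_iff₀ hc, hT]
    nlinarith [mul_nonneg (mul_nonneg hD hδ) (by linarith : 0 ≤ k),
      mul_nonneg hD (by linarith : 0 ≤ k),
      mul_nonneg hδ (mul_nonneg (by linarith : 0 ≤ 5 * k + 1) (by linarith : 0 ≤ k - 1))]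
  nlinarith [h n hTn, mul_nonneg hδ (by linarith : 0 ≤ k - 1),
    mul_nonneg (mul_nonneg hδ hδ) (by linarith : 0 ≤ k)]

end Arithmetic

section Geodesics

variable {X : Type*} [MetricSpace X]

namespace IsGeodesicSegment

variable {x y : X} {γ : ℝ → X}

theorem dist_eq (h : IsGeodesicSegment x y γ) {s t : ℝ} (hs : s ∈ Icc 0 (dist x y))
    (ht : t ∈ Icc 0 (dist x y)) : dist (γ s) (γ t) = |s - t| :=
  h.2.2 s hs t ht

theorem dist_eq_sub (h : IsGeodesicSegment x y γ) {u v : ℝ} (hu : 0 ≤ u) (huv : u ≤ v)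
    (hv : v ≤ dist x y) : dist (γ u) (γ v) = v - u := by
  rw [h.dist_eq ⟨hu, huv.trans hv⟩ ⟨hu.trans huv, hv⟩, abs_sub_comm,
    abs_of_nonneg (sub_nonneg.2 huv)]

theorem left_mem_image (h : IsGeodesicSegment x y γ) : x ∈ γ '' Icc 0 (dist x y) :=
  ⟨0, ⟨le_rfl, dist_nonneg⟩, h.1⟩

theorem right_mem_image (h : IsGeodesicSegment x y γ) : y ∈ γ '' Icc 0 (dist x y) :=
  ⟨dist x y, ⟨dist_nonneg, le_rfl⟩, h.2.1⟩

theorem dist_add_dist_eq (h : IsGeodesicSegment x y γ) {w : X}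
    (hw : w ∈ γ '' Icc 0 (dist x y)) : dist x w + dist w y = dist x y := by
  obtain ⟨t, ht, rfl⟩ := hw
  have hx := h.dist_eq_sub le_rfl ht.1 ht.2
  have hy := h.dist_eq_sub ht.1 ht.2 le_rfl
  rw [h.1] at hx
  rw [h.2.1] at hy
  rw [hx, hy]
  ring

theorem image_subset_closedBall_left (h : IsGeodesicSegment x y γ) :
    γ '' Icc 0 (dist x y) ⊆ closedBall x (dist x y) := fun w hw => by
  rw [mem_closedBall, dist_comm, ← h.dist_add_dist_eq hw]
  linarith [dist_nonneg (x := w) (y := y)]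

theorem image_subset_closedBall_right (h : IsGeodesicSegment x y γ) :
    γ '' Icc 0 (dist x y) ⊆ closedBall y (dist x y) := fun w hw => by
  rw [mem_closedBall, ← h.dist_add_dist_eq hw]
  linarith [dist_nonneg (x := x) (y := w)]

theorem continuousOn (h : IsGeodesicSegment x y γ) : ContinuousOn γ (Icc 0 (dist x y)) :=
  (LipschitzOnWith.of_dist_le_mul (K := 1) fun s hs t ht => by
    simp [h.dist_eq hs ht, Real.dist_eq]).continuousOn

theorem isCompact_image (h : IsGeodesicSegment x y γ) : IsCompact (γ '' Icc 0 (dist x y)) :=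
  isCompact_Icc.image_of_continuousOn h.continuousOn

theorem isPreconnected_image (h : IsGeodesicSegment x y γ) :
    IsPreconnected (γ '' Icc 0 (dist x y)) :=
  isPreconnected_Icc.image γ h.continuousOn

theorem comp_add (h : IsGeodesicSegment x y γ) {u v : ℝ} (hu : 0 ≤ u) (huv : u ≤ v)
    (hv : v ≤ dist x y) : IsGeodesicSegment (γ u) (γ v) (fun t => γ (u + t)) := by
  have huv' := h.dist_eq_sub hu huv hv
  refine ⟨by simp, by simp [huv'], fun s hs t ht => ?_⟩
  rw [huv'] at hs ht
  rw [h.dist_eq ⟨by linarith [hs.1], by linarith [hs.2]⟩ ⟨by linarith [ht.1], by linarith [ht.2]⟩,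
    add_sub_add_left_eq_sub]

theorem apply_mem_image_comp_add (h : IsGeodesicSegment x y γ) {u t v : ℝ} (hu : 0 ≤ u)
    (hut : u ≤ t) (htv : t ≤ v) (hv : v ≤ dist x y) :
    γ t ∈ (fun s => γ (u + s)) '' Icc 0 (dist (γ u) (γ v)) :=
  ⟨t - u, ⟨sub_nonneg.2 hut, by rw [h.dist_eq_sub hu (hut.trans htv) hv]; linarith⟩,
    by simp only [add_sub_cancel]⟩

theorem exists_subsegment (h : IsGeodesicSegment x y γ) {t₀ D : ℝ}
    (ht₀ : t₀ ∈ Icc 0 (dist x y)) (hD : 0 ≤ D) (hx : D ≤ dist (γ t₀) x) (hy : D ≤ dist (γ t₀) y) :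
    ∃ u v, 0 ≤ u ∧ u ≤ t₀ ∧ t₀ ≤ v ∧ v ≤ dist x y ∧ v - u ≤ 2 * D ∧
      D ≤ dist (γ t₀) (γ u) ∧ D ≤ dist (γ t₀) (γ v) := by
  refine ⟨max 0 (t₀ - D), min (dist x y) (t₀ + D), le_max_left _ _, max_le ht₀.1 (by linarith),
    le_min ht₀.2 (by linarith), min_le_left _ _, ?_, ?_, ?_⟩
  · linarith [le_max_right 0 (t₀ - D), min_le_right (dist x y) (t₀ + D)]
  · rcases max_cases 0 (t₀ - D) with ⟨hu, -⟩ | ⟨hu, hlt⟩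
    · rwa [hu, h.1]
    · rw [hu, dist_comm, h.dist_eq_sub hlt.le (by linarith) ht₀.2]
      linarith
  · rcases min_cases (dist x y) (t₀ + D) with ⟨hv, -⟩ | ⟨hv, hlt⟩
    · rwa [hv, h.2.1]
    · rw [hv, h.dist_eq_sub ht₀.1 (by linarith) hlt.le]
      linarith

end IsGeodesicSegment

namespace IsQuasigeodesic

variable {k a b : ℝ} {p : ℝ → X}

theorem dist_le (hp : IsQuasigeodesic k a b p) {s t : ℝ} (hs : s ∈ Icc a b) (ht : t ∈ Icc a b) :
    dist (p s) (p t) ≤ k * |s - t| + k :=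
  (hp s hs t ht).2

theorem abs_sub_le (hk : 0 < k) (hp : IsQuasigeodesic k a b p) {s t : ℝ} (hs : s ∈ Icc a b)
    (ht : t ∈ Icc a b) : |s - t| ≤ k * (dist (p s) (p t) + k) :=
  calc |s - t| = k * (1 / k * |s - t|) := by field_simp
    _ ≤ k * (dist (p s) (p t) + k) := by gcongr; linarith [(hp s hs t ht).1]

theorem image_subset_cthickening_of_isPreconnected (hk : 0 < k) (hp : IsQuasigeodesic k a b p)
    {C : ℝ} (hC : 0 ≤ C) {K : Set X} (hK : IsPreconnected K) (ha : p a ∈ K) (hb : p b ∈ K)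
    (hKp : K ⊆ cthickening C (p '' Icc a b)) :
    p '' Icc a b ⊆ cthickening (k ^ 2 * (2 * C + 2 + k) + k + C + 1) K := by
  rintro _ ⟨t, ht, rfl⟩
  obtain ⟨x, hxK, hxA, hxB⟩ := hK.exists_mem_cthickening_inter (A := p '' Icc a t)
    (B := p '' Icc t b) (by rwa [← image_union, Icc_union_Icc_eq_Icc ht.1 ht.2])
    ⟨p a, ha, mem_image_of_mem p ⟨le_rfl, ht.1⟩⟩ ⟨p b, hb, mem_image_of_mem p ⟨ht.2, le_rfl⟩⟩
  have hC1 : 0 < C + 1 := by linarith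
  obtain ⟨_, ⟨r₁, hr₁, rfl⟩, hxr₁⟩ :=
    mem_thickening_iff.1 (cthickening_subset_thickening' hC1 (lt_add_one C) _ hxA)
  obtain ⟨_, ⟨r₂, hr₂, rfl⟩, hxr₂⟩ :=
    mem_thickening_iff.1 (cthickening_subset_thickening' hC1 (lt_add_one C) _ hxB)
  have hr₁' : r₁ ∈ Icc a b := ⟨hr₁.1, hr₁.2.trans ht.2⟩
  have hr₂' : r₂ ∈ Icc a b := ⟨ht.1.trans hr₂.1, hr₂.2⟩
  have hr : |r₁ - r₂| ≤ k * (2 * C + 2 + k) :=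
    calc |r₁ - r₂| ≤ k * (dist (p r₁) (p r₂) + k) := hp.abs_sub_le hk hr₁' hr₂'
      _ ≤ k * (2 * C + 2 + k) := by gcongr; linarith [dist_triangle_left (p r₁) (p r₂) x]
  have htr : |t - r₁| ≤ |r₁ - r₂| := by
    rw [abs_of_nonneg (by linarith [hr₁.2]), abs_of_nonpos (by linarith [hr₁.2, hr₂.1])]
    linarith [hr₂.1]
  refine mem_cthickening_of_dist_le _ x _ K hxK ?_
  calc dist (p t) x ≤ dist (p t) (p r₁) + dist x (p r₁) := dist_triangle_right _ _ _
    _ ≤ k * |t - r₁| + k + (C + 1) := add_le_add (hp.dist_le ht hr₁') hxr₁.le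
    _ ≤ k * (k * (2 * C + 2 + k)) + k + (C + 1) := by gcongr; exact htr.trans hr
    _ = k ^ 2 * (2 * C + 2 + k) + k + C + 1 := by ring

end IsQuasigeodesic

namespace SlimTriangles

variable {δ : ℝ}

theorem image_subset_cthickening_quadrilateral (hslim : SlimTriangles (X := X) δ)
    (hgeo : GeodesicSpace X) (hδ : 0 ≤ δ) {x y z w : X} {γ₁ γ₂ γ₃ γ : ℝ → X}
    (h₁ : IsGeodesicSegment x y γ₁) (h₂ : IsGeodesicSegment y z γ₂)
    (h₃ : IsGeodesicSegment z w γ₃) (h : IsGeodesicSegment x w γ) :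
    γ '' Icc 0 (dist x w) ⊆ cthickening (2 * δ)
      (γ₁ '' Icc 0 (dist x y) ∪ γ₂ '' Icc 0 (dist y z) ∪ γ₃ '' Icc 0 (dist z w)) := by
  obtain ⟨η, hη⟩ := hgeo x z
  rw [two_mul]
  refine subset_cthickening_trans hδ hδ (hslim x z w η γ₃ γ hη h₃ h).2.2 (union_subset ?_ ?_)
  · exact (hslim x y z γ₁ γ₂ η h₁ h₂ hη).2.2.trans
      (cthickening_subset_of_subset δ subset_union_left)
  · exact subset_union_right.trans (self_subset_cthickening _)

theorem image_subset_cthickening_of_dist_le (hslim : SlimTriangles (X := X) δ)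
    (hgeo : GeodesicSpace X) (hδ : 0 ≤ δ) {x₁ x₂ y₁ y₂ : X} {γ₁ γ₂ : ℝ → X}
    (hγ₁ : IsGeodesicSegment x₁ x₂ γ₁) (hγ₂ : IsGeodesicSegment y₁ y₂ γ₂) {R : ℝ}
    (h₁ : dist x₁ y₁ ≤ R) (h₂ : dist x₂ y₂ ≤ R) :
    γ₁ '' Icc 0 (dist x₁ x₂) ⊆ cthickening (2 * δ + R) (γ₂ '' Icc 0 (dist y₁ y₂)) := by
  obtain ⟨ρ, hρ⟩ := hgeo x₁ y₁
  obtain ⟨τ, hτ⟩ := hgeo y₂ x₂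
  refine subset_cthickening_trans (by positivity) (dist_nonneg.trans h₁)
    (hslim.image_subset_cthickening_quadrilateral hgeo hδ hρ hγ₂ hτ hγ₁)
    (union_subset (union_subset ?_ (self_subset_cthickening _)) ?_)
  · exact hρ.image_subset_closedBall_right.trans ((closedBall_subset_closedBall h₁).trans
      (closedBall_subset_cthickening hγ₂.left_mem_image R))
  · exact hτ.image_subset_closedBall_left.trans
      ((closedBall_subset_closedBall (by rwa [dist_comm])).trans
        (closedBall_subset_cthickening hγ₂.right_mem_image R))

theorem mem_cthickening_of_far (hslim : SlimTriangles (X := X) δ) (hgeo : GeodesicSpace X)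
    (hδ : 0 ≤ δ) {y₁ z₁ z₂ y₂ x₀ : X} {σ₁ η σ₂ γ : ℝ → X} (hσ₁ : IsGeodesicSegment y₁ z₁ σ₁)
    (hη : IsGeodesicSegment z₁ z₂ η) (hσ₂ : IsGeodesicSegment z₂ y₂ σ₂)
    (hγ : IsGeodesicSegment y₁ y₂ γ) (hx₀ : x₀ ∈ γ '' Icc 0 (dist y₁ y₂)) {D r : ℝ}
    (hy₁ : D ≤ dist x₀ y₁) (hz₁ : D ≤ dist x₀ z₁) (hr₁ : dist y₁ z₁ ≤ r)
    (hz₂ : D ≤ dist x₀ z₂) (hy₂ : D ≤ dist x₀ y₂) (hr₂ : dist z₂ y₂ ≤ r)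
    (hDr : 4 * δ + r < 2 * D) : x₀ ∈ cthickening (2 * δ) (η '' Icc 0 (dist z₁ z₂)) := by
  have far : ∀ {y z : X} {σ : ℝ → X}, IsGeodesicSegment y z σ → D ≤ dist x₀ y →
      D ≤ dist x₀ z → dist y z ≤ r → x₀ ∉ cthickening (2 * δ) (σ '' Icc 0 (dist y z)) := by
    intro y z σ hσ hy hz hr hx₀σ
    rw [hσ.isCompact_image.cthickening_eq_biUnion_closedBall (by positivity)] at hx₀σ
    obtain ⟨w, hw, hx₀w⟩ := mem_iUnion₂.1 hx₀σ
    have := hσ.dist_add_dist_eq hw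
    linarith [mem_closedBall.1 hx₀w, dist_triangle_right x₀ y w, dist_triangle x₀ w z]
  have hquad := hslim.image_subset_cthickening_quadrilateral hgeo hδ hσ₁ hη hσ₂ hγ hx₀
  rw [cthickening_union, cthickening_union] at hquad
  rcases hquad with (h | h) | h
  · exact absurd h (far hσ₁ hy₁ hz₁ hr₁)
  · exact h
  · exact absurd h (far hσ₂ hz₂ hy₂ hr₂)

end SlimTriangles

namespace IsQuasigeodesic

variable {δ k a b : ℝ} {p : ℝ → X}

theorem image_geodesic_subset_cthickening_of_abs_sub_le_two_pow (hgeo : GeodesicSpace X)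
    (hδ : 0 ≤ δ) (hslim : SlimTriangles (X := X) δ) (hk : 0 ≤ k) (hp : IsQuasigeodesic k a b p)
    (n : ℕ) {s t : ℝ} (hs : s ∈ Icc a b) (ht : t ∈ Icc a b) (hst : |s - t| ≤ 2 ^ n) {γ : ℝ → X}
    (hγ : IsGeodesicSegment (p s) (p t) γ) :
    γ '' Icc 0 (dist (p s) (p t)) ⊆ cthickening (2 * k + n * δ) (p '' Icc a b) := by
  induction n generalizing s t γ with
  | zero =>
    have hd : dist (p s) (p t) ≤ 2 * k := by
      rw [pow_zero] at hst
      nlinarith [hp.dist_le hs ht]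
    simpa using hγ.image_subset_closedBall_left.trans ((closedBall_subset_closedBall hd).trans
      (closedBall_subset_cthickening (mem_image_of_mem p hs) _))
  | succ n ih =>
    have hm : (s + t) / 2 ∈ Icc a b := ⟨by linarith [hs.1, ht.1], by linarith [hs.2, ht.2]⟩
    have half : |s - t| / 2 ≤ 2 ^ n := by rw [pow_succ] at hst; linarith
    have hsm : |s - (s + t) / 2| ≤ 2 ^ n := by
      rwa [show s - (s + t) / 2 = (s - t) / 2 by ring, abs_div, abs_two]
    have hmt : |(s + t) / 2 - t| ≤ 2 ^ n := by
      rwa [show (s + t) / 2 - t = (s - t) / 2 by ring, abs_div, abs_two]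
    obtain ⟨γ₁, hγ₁⟩ := hgeo (p s) (p ((s + t) / 2))
    obtain ⟨γ₂, hγ₂⟩ := hgeo (p ((s + t) / 2)) (p t)
    rw [show 2 * k + ((n + 1 : ℕ) : ℝ) * δ = δ + (2 * k + n * δ) by push_cast; ring]
    exact subset_cthickening_trans hδ (add_nonneg (by linarith) (mul_nonneg n.cast_nonneg hδ))
      (hslim _ _ _ γ₁ γ₂ γ hγ₁ hγ₂ hγ).2.2 (union_subset (ih hs hm hsm hγ₁) (ih hm ht hmt hγ₂))

theorem image_geodesic_subset_cthickening (hgeo : GeodesicSpace X) (hδ : 0 ≤ δ)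
    (hslim : SlimTriangles (X := X) δ) (hk : 1 ≤ k) (hab : a ≤ b) (hp : IsQuasigeodesic k a b p)
    {γ : ℝ → X} (hγ : IsGeodesicSegment (p a) (p b) γ) :
    γ '' Icc 0 (dist (p a) (p b)) ⊆ cthickening (50 * k * (δ + 1) ^ 2) (p '' Icc a b) := by
  set S := p '' Icc a b
  have hS : S.Nonempty := ⟨p a, mem_image_of_mem p ⟨le_rfl, hab⟩⟩
  obtain ⟨t₀, ht₀, hmax⟩ := isCompact_Icc.exists_isMaxOn (nonempty_Icc.2 dist_nonneg)
    ((continuous_infDist_pt S).comp_continuousOn hγ.continuousOn)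
  set D := infDist (γ t₀) S
  have hD : 0 ≤ D := infDist_nonneg
  suffices D ≤ 50 * k * (δ + 1) ^ 2 by
    rintro _ ⟨t, ht, rfl⟩
    exact (mem_cthickening_iff_infDist_le hS (by positivity)).2 ((hmax ht).trans this)
  refine le_of_forall_le_two_pow_imp hk hδ hD fun n hn => ?_
  have hDS : ∀ s ∈ Icc a b, D ≤ dist (γ t₀) (p s) := fun s hs =>
    infDist_le_dist_of_mem (mem_image_of_mem p hs)
  obtain ⟨u, v, hu, hut₀, ht₀v, hv, hvu, hDu, hDv⟩ := hγ.exists_subsegment ht₀ hD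
    (hDS a ⟨le_rfl, hab⟩) (hDS b ⟨hab, le_rfl⟩)
  have hnear : ∀ t ∈ Icc 0 (dist (p a) (p b)), ∃ s ∈ Icc a b, dist (γ t) (p s) < D + 1 :=
    fun t ht => by
      obtain ⟨_, ⟨s, hs, rfl⟩, h⟩ := (infDist_lt_iff hS).1 ((hmax ht).trans_lt (lt_add_one D))
      exact ⟨s, hs, h⟩
  obtain ⟨s₁, hs₁, hus₁⟩ := hnear u ⟨hu, hut₀.trans ht₀.2⟩
  obtain ⟨s₂, hs₂, hvs₂⟩ := hnear v ⟨ht₀.1.trans ht₀v, hv⟩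
  have hs₁s₂ : |s₁ - s₂| ≤ k * (4 * D + 2 + k) :=
    calc |s₁ - s₂| ≤ k * (dist (p s₁) (p s₂) + k) := hp.abs_sub_le (by linarith) hs₁ hs₂
      _ ≤ k * (4 * D + 2 + k) := by
        gcongr
        have := hγ.dist_eq_sub hu (hut₀.trans ht₀v) hv
        linarith [dist_triangle4 (p s₁) (γ u) (γ v) (p s₂), dist_comm (p s₁) (γ u)]
  obtain ⟨σ₁, hσ₁⟩ := hgeo (γ u) (p s₁)
  obtain ⟨η, hη⟩ := hgeo (p s₁) (p s₂)
  obtain ⟨σ₂, hσ₂⟩ := hgeo (p s₂) (γ v)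
  rcases le_or_gt (2 * D) (4 * δ + (D + 1)) with hsmall | hbig
  · nlinarith [mul_nonneg n.cast_nonneg hδ]
  have hx₀η := hslim.mem_cthickening_of_far hgeo hδ hσ₁ hη hσ₂ (hγ.comp_add hu (hut₀.trans ht₀v) hv)
    (hγ.apply_mem_image_comp_add hu hut₀ ht₀v hv) hDu (hDS s₁ hs₁) hus₁.le (hDS s₂ hs₂) hDv
    (by rw [dist_comm]; exact hvs₂.le) hbig
  have hηS := hp.image_geodesic_subset_cthickening_of_abs_sub_le_two_pow hgeo hδ hslim
    (by linarith) n hs₁ hs₂ (hs₁s₂.trans hn) hη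
  have hx₀S := subset_cthickening_trans (by positivity)
    (add_nonneg (by linarith) (mul_nonneg n.cast_nonneg hδ)) (singleton_subset_iff.2 hx₀η) hηS
  have := (mem_cthickening_iff_infDist_le hS (by positivity)).1 (singleton_subset_iff.1 hx₀S)
  linarith

theorem image_subset_cthickening_image (hgeo : GeodesicSpace X) (hδ : 0 ≤ δ)
    (hslim : SlimTriangles (X := X) δ) {a' b' R : ℝ} {q : ℝ → X} (hk : 1 ≤ k) (hab : a ≤ b)
    (ha'b' : a' ≤ b') (hp : IsQuasigeodesic k a b p) (hq : IsQuasigeodesic k a' b' q)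
    (ha : dist (p a) (q a') ≤ R) (hb : dist (p b) (q b') ≤ R) :
    p '' Icc a b ⊆ cthickening (300 * k ^ 3 * (δ + 1) ^ 2 + R) (q '' Icc a' b') := by
  obtain ⟨γp, hγp⟩ := hgeo (p a) (p b)
  obtain ⟨γq, hγq⟩ := hgeo (q a') (q b')
  have hC : 0 ≤ 50 * k * (δ + 1) ^ 2 := by positivity
  have hpγp := hp.image_subset_cthickening_of_isPreconnected (by linarith) hC
    hγp.isPreconnected_image hγp.left_mem_image hγp.right_mem_image
    (hp.image_geodesic_subset_cthickening hgeo hδ hslim hk hab hγp)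
  have hγpγq := hslim.image_subset_cthickening_of_dist_le hgeo hδ hγp hγq ha hb
  have hγqq := hq.image_geodesic_subset_cthickening hgeo hδ hslim hk ha'b' hγq
  have hR : 0 ≤ R := dist_nonneg.trans ha
  refine (subset_cthickening_trans (by positivity) hC
    (subset_cthickening_trans (by positivity) (by positivity) hpγp hγpγq) hγqq).trans
    (cthickening_mono ?_ _)
  have hE : 1 + 2 * δ ≤ (δ + 1) ^ 2 := by nlinarith
  have hk3 : k ≤ k ^ 3 := le_self_pow₀ hk (by norm_num)
  have hk2 : k ^ 2 ≤ k ^ 3 := pow_le_pow_right₀ hk (by norm_num)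
  nlinarith [mul_le_mul_of_nonneg_left hE (by positivity : (0 : ℝ) ≤ k ^ 3),
    mul_le_mul_of_nonneg_right hk3 (sq_nonneg (δ + 1))]

end IsQuasigeodesic

end Geodesics

/-- **Corollary 2.2.6.** In a `δ`-hyperbolic geodesic space, two `k`-quasigeodesics whose
respective endpoints are within distance `R` of each other lie in closed
`N(k,R)`-neighborhoods of one another, where `N(k,R)` may be chosen bounded by a
polynomial in `k` and `R`. -/
theorem stmt_7 {X : Type*} [MetricSpace X] (hgeo : GeodesicSpace X)
    (δ : ℝ) (hδ : 0 ≤ δ) (hslim : SlimTriangles (X := X) δ) :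
    ∃ N : ℝ → ℝ → ℝ,
      (∃ Q : MvPolynomial (Fin 2) ℝ, ∀ k R : ℝ, 1 ≤ k → 0 ≤ R →
        N k R ≤ MvPolynomial.eval ![k, R] Q) ∧
      ∀ k R : ℝ, 1 ≤ k → 0 ≤ R →
        ∀ a b a' b' : ℝ, a ≤ b → a' ≤ b' →
        ∀ p q : ℝ → X, IsQuasigeodesic k a b p → IsQuasigeodesic k a' b' q →
          dist (p a) (q a') ≤ R → dist (p b) (q b') ≤ R →
          p '' Set.Icc a b ⊆ Metric.cthickening (N k R) (q '' Set.Icc a' b') ∧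
          q '' Set.Icc a' b' ⊆ Metric.cthickening (N k R) (p '' Set.Icc a b) := by
  refine ⟨fun k R => 300 * k ^ 3 * (δ + 1) ^ 2 + R,
    ⟨MvPolynomial.C (300 * (δ + 1) ^ 2) * MvPolynomial.X 0 ^ 3 + MvPolynomial.X 1,
      fun k R _ _ => le_of_eq (by
        simp only [map_add, map_mul, map_pow, MvPolynomial.eval_C, MvPolynomial.eval_X,
          Matrix.cons_val_zero, Matrix.cons_val_one, Matrix.cons_val_fin_one]
        ring)⟩, ?_⟩
  intro k R hk _ a b a' b' hab ha'b' p q hp hq ha hb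
  exact ⟨hp.image_subset_cthickening_image hgeo hδ hslim hk hab ha'b' hq ha hb,
    hq.image_subset_cthickening_image hgeo hδ hslim hk ha'b' hab hp
      (by rwa [dist_comm]) (by rwa [dist_comm])⟩
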